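/- Let n ≥ 0 be an integer and let b, c, f be complex numbers such that c − b − f is not equal to any integer m with −n ≤ m ≤ n. Then (c)^(n) = ∑_{j=0}^{n} (−1)^j · C(n, j) · (b)^(j) · (f)^(j) · (c − b)^(n−j) · (c − f)^(n−j) · (c − b − f + n − 2j) / (c − b − f − j)^(n+1). -/

import Mathlib

/-- The rising factorial (Pochhammer symbol) `(y)^(k) = y(y+1)⋯(y+k-1)`. -/
noncomputable def risingFactorial (x : ℂ) (n : ℕ) : ℂ :=
  ∏ i ∈ Finset.range n, (x + i)

lemma rf_succ (x : ℂ) (k : ℕ) : risingFactorial x (k+1) = risingFactorial x k * (x + k) :=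
  Finset.prod_range_succ _ _

lemma rf_succ' (x : ℂ) (k : ℕ) : risingFactorial x (k+1) = x * risingFactorial (x+1) k := by
  rw [risingFactorial, Finset.prod_range_succ', risingFactorial]
  rw [Finset.prod_congr rfl
    (fun i _ => by push_cast; ring : ∀ i ∈ Finset.range k, x + ((i+1:ℕ):ℂ) = (x+1)+i)]
  push_cast; ring

lemma rf_zero (x : ℂ) : risingFactorial x 0 = 1 := by simp [risingFactorial]

lemma rf_one (x : ℂ) : risingFactorial x 1 = x := by simp [risingFactorial]

lemma rf_ne_zero {x : ℂ} {k : ℕ} (h : ∀ i < k, x + i ≠ 0) : risingFactorial x k ≠ 0 :=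
  Finset.prod_ne_zero_iff.2 fun i hi => h i (Finset.mem_range.1 hi)

noncomputable def T (b f s : ℂ) (n j : ℕ) : ℂ :=
  (-1:ℂ)^j * (n.choose j : ℂ) * risingFactorial b j * risingFactorial f j *
    risingFactorial (s+f) (n-j) * risingFactorial (s+b) (n-j) * (s + n - 2*j) /
    risingFactorial (s - j) (n+1)

noncomputable def Gg (b f s : ℂ) (n i : ℕ) : ℂ :=
  (-1:ℂ)^i * (n.choose i : ℂ) * risingFactorial b (i+1) * risingFactorial f (i+1) *
    risingFactorial (s+f) (n-i) * risingFactorial (s+b) (n-i) /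
    risingFactorial (s - i) (n+1)

lemma rf_shift_ne (s : ℂ) (N : ℕ)
    (hfac : ∀ t : ℤ, -(N:ℤ) ≤ t → t ≤ N → s + t ≠ 0)
    (j L : ℕ) (hj : j ≤ N) (hL : L ≤ N + 1) :
    risingFactorial (s - (j:ℕ)) L ≠ 0 := by
  refine rf_ne_zero fun i hi h0 => ?_
  have : s + ((i:ℤ) - (j:ℤ) : ℤ) = 0 := by push_cast; push_cast at h0; linear_combination h0
  exact hfac ((i:ℤ) - j) (by omega) (by omega) this

lemma T_top (b f s : ℂ) (n : ℕ) : T b f s n (n+1) = 0 := by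
  simp [T, Nat.choose_succ_self]

lemma Gg_top (b f s : ℂ) (n : ℕ) : Gg b f s n (n+1) = 0 := by
  simp [Gg, Nat.choose_succ_self]

lemma wz_zero (b f s : ℂ) (n : ℕ)
    (hD : risingFactorial s (n+1) ≠ 0)
    (hx : s + ((n+1:ℕ):ℂ) ≠ 0) :
    T b f s (n+1) 0 - (s+b+f+(n:ℕ)) * T b f s n 0 = Gg b f s n 0 := by
  have hD2 : risingFactorial s (n+2) = risingFactorial s (n+1) * (s + ((n+1:ℕ):ℂ)) :=
    rf_succ _ _
  simp only [T, Gg, Nat.sub_zero, Nat.choose_zero_right, pow_zero, Nat.cast_zero,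
    Nat.cast_one, sub_zero, mul_zero, zero_add, rf_zero, rf_one, one_mul, mul_one]
  rw [show n+1+1 = n+2 from rfl, hD2, mul_div_mul_right _ _ hx, ← mul_div_assoc,
    div_sub_div_same]
  congr 1
  rw [rf_succ (s+f) n, rf_succ (s+b) n]
  push_cast
  ring

lemma wz_top (b f s : ℂ) (n : ℕ)
    (hE : risingFactorial (s - (n:ℕ)) (n+1) ≠ 0)
    (h4 : s - ((n+1:ℕ):ℂ) ≠ 0) :
    T b f s (n+1) (n+1) - (s+b+f+(n:ℕ)) * T b f s n (n+1)
      = Gg b f s n (n+1) - Gg b f s n n := by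
  rw [T_top, Gg_top]
  have hDb : risingFactorial (s - ((n+1:ℕ):ℂ)) (n+2)
      = risingFactorial (s - ((n:ℕ):ℂ)) (n+1) * (s - ((n+1:ℕ):ℂ)) := by
    rw [rf_succ' (s - ((n+1:ℕ):ℂ)) (n+1), mul_comm]
    congr 2
    push_cast; ring
  simp only [T, Gg, Nat.sub_self, Nat.choose_self, Nat.cast_one, rf_zero, mul_one, one_mul]
  rw [show n+1+1 = n+2 from rfl, hDb,
    show s + ((n+1:ℕ):ℂ) - 2*((n+1:ℕ):ℂ) = s - ((n+1:ℕ):ℂ) from by ring]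
  rw [mul_div_mul_right _ _ h4, mul_zero, sub_zero, zero_sub, ← neg_div]
  congr 1
  ring


set_option maxHeartbeats 1000000 in
lemma wz_mid (b f s : ℂ) (i k : ℕ)
    (h1 : risingFactorial (s - ((i+1:ℕ):ℂ)) (i+k+2) ≠ 0)
    (h2 : risingFactorial (s - ((i:ℕ):ℂ)) (i+k+2) ≠ 0)
    (h3 : s - ((i+1:ℕ):ℂ) + ((i+k+2:ℕ):ℂ) ≠ 0)
    (h4 : s - ((i+1:ℕ):ℂ) ≠ 0) :
    T b f s (i+k+2) (i+1) - (s+b+f+((i+k+1:ℕ):ℂ)) * T b f s (i+k+1) (i+1)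
      = Gg b f s (i+k+1) (i+1) - Gg b f s (i+k+1) i := by
  have e1 : (i+k+2) - (i+1) = k+1 := by omega
  have e2 : (i+k+1) - (i+1) = k := by omega
  have e3 : (i+k+1) - i = k+1 := by omega
  have hpas : (((i+k+2).choose (i+1) : ℕ) : ℂ)
      = ((i+k+1).choose i : ℂ) + ((i+k+1).choose (i+1) : ℂ) := by
    exact_mod_cast congrArg (Nat.cast (R := ℂ)) (Nat.choose_succ_succ (i+k+1) i)
  have hii : ((i:ℂ)+1) ≠ 0 := Nat.cast_add_one_ne_zero i
  have hc2 : (((i+k+1).choose (i+1) : ℕ) : ℂ)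
      = ((i+k+1).choose i : ℂ) * ((k:ℂ)+1) / ((i:ℂ)+1) := by
    rw [eq_div_iff hii]
    have hn := Nat.choose_succ_right_eq (i+k+1) i
    rw [e3] at hn
    exact_mod_cast hn
  have hDa : risingFactorial (s - ((i+1:ℕ):ℂ)) (i+k+3)
      = risingFactorial (s - ((i+1:ℕ):ℂ)) (i+k+2) * (s - ((i+1:ℕ):ℂ) + ((i+k+2:ℕ):ℂ)) :=
    rf_succ _ _
  have hDb : risingFactorial (s - ((i+1:ℕ):ℂ)) (i+k+3)
      = (s - ((i+1:ℕ):ℂ)) * risingFactorial (s - ((i:ℕ):ℂ)) (i+k+2) := by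
    rw [rf_succ' (s - ((i+1:ℕ):ℂ)) (i+k+2)]
    congr 2
    push_cast; ring
  have hM : risingFactorial (s - ((i+1:ℕ):ℂ)) (i+k+3) ≠ 0 := by
    rw [hDa]; exact mul_ne_zero h1 h3
  have hT1 : T b f s (i+k+2) (i+1)
      = ((-1:ℂ)^(i+1) * ((i+k+2).choose (i+1) : ℂ) * risingFactorial b (i+1) *
          risingFactorial f (i+1) * risingFactorial (s+f) (k+1) * risingFactorial (s+b) (k+1) *
          (s + ((i+k+2:ℕ):ℂ) - 2*((i+1:ℕ):ℂ)))
        / risingFactorial (s - ((i+1:ℕ):ℂ)) (i+k+3) := by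
    simp only [T, e1, show i+k+2+1 = i+k+3 from rfl]
  have hT2 : T b f s (i+k+1) (i+1)
      = ((-1:ℂ)^(i+1) * ((i+k+1).choose (i+1) : ℂ) * risingFactorial b (i+1) *
          risingFactorial f (i+1) * risingFactorial (s+f) k * risingFactorial (s+b) k *
          (s + ((i+k+1:ℕ):ℂ) - 2*((i+1:ℕ):ℂ))) * (s - ((i+1:ℕ):ℂ) + ((i+k+2:ℕ):ℂ))
        / risingFactorial (s - ((i+1:ℕ):ℂ)) (i+k+3) := by
    simp only [T, e2, show i+k+1+1 = i+k+2 from rfl]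
    rw [hDa, mul_div_mul_right _ _ h3]
  have hG1 : Gg b f s (i+k+1) (i+1)
      = ((-1:ℂ)^(i+1) * ((i+k+1).choose (i+1) : ℂ) * risingFactorial b (i+2) *
          risingFactorial f (i+2) * risingFactorial (s+f) k * risingFactorial (s+b) k)
          * (s - ((i+1:ℕ):ℂ) + ((i+k+2:ℕ):ℂ))
        / risingFactorial (s - ((i+1:ℕ):ℂ)) (i+k+3) := by
    simp only [Gg, e2, show i+1+1 = i+2 from rfl, show i+k+1+1 = i+k+2 from rfl]
    rw [hDa, mul_div_mul_right _ _ h3]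
  have hG2 : Gg b f s (i+k+1) i
      = (s - ((i+1:ℕ):ℂ)) * ((-1:ℂ)^i * ((i+k+1).choose i : ℂ) * risingFactorial b (i+1) *
          risingFactorial f (i+1) * risingFactorial (s+f) (k+1) * risingFactorial (s+b) (k+1))
        / risingFactorial (s - ((i+1:ℕ):ℂ)) (i+k+3) := by
    simp only [Gg, e3, show i+k+1+1 = i+k+2 from rfl]
    rw [hDb, mul_div_mul_left _ _ h4]
  rw [hT1, hT2, hG1, hG2, ← mul_div_assoc, div_sub_div_same, div_sub_div_same]
  congr 1
  rw [hpas, hc2, rf_succ b (i+1), rf_succ f (i+1), rf_succ (s+f) k, rf_succ (s+b) k]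
  field_simp
  push_cast
  ring

lemma key (b f : ℂ) : ∀ (n : ℕ) (s : ℂ),
    (∀ m : ℤ, -(n:ℤ) ≤ m → m ≤ (n:ℤ) → s ≠ m) →
    ∑ j ∈ Finset.range (n+1), T b f s n j = risingFactorial (s+b+f) n := by
  intro n
  induction n with
  | zero =>
    intro s hs
    have hs0 : s ≠ 0 := by simpa using hs 0 (by norm_num) (by norm_num)
    simp [T, rf_zero, rf_one, risingFactorial, div_self hs0]
  | succ n ih =>
    intro s hs
    have hfacN : ∀ t : ℤ, -(((n+1:ℕ)):ℤ) ≤ t → t ≤ ((n+1:ℕ):ℤ) → s + t ≠ 0 := by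
      intro t h1 h2 h0
      refine hs (-t) (by push_cast; push_cast at h1 h2; omega)
        (by push_cast; push_cast at h1 h2; omega) ?_
      push_cast
      linear_combination h0
    have hs' : ∀ m : ℤ, -(n:ℤ) ≤ m → m ≤ (n:ℤ) → s ≠ m := fun m a c =>
      hs m (by omega) (by omega)
    set H : ℕ → ℂ := fun j => Nat.casesOn j 0 (fun i => Gg b f s n i) with hH
    have tele : ∀ j ∈ Finset.range (n+2),
        T b f s (n+1) j = (s+b+f+(n:ℕ)) * T b f s n j + (H (j+1) - H j) := by
      intro j hj
      rw [Finset.mem_range] at hj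
      have key2 : T b f s (n+1) j - (s+b+f+(n:ℕ)) * T b f s n j = H (j+1) - H j := by
        match j with
        | 0 =>
          show _ = Gg b f s n 0 - 0
          rw [sub_zero]
          apply wz_zero
          · have := rf_shift_ne s (n+1) hfacN 0 (n+1) (by omega) (by omega)
            simpa using this
          · intro h0
            exact hfacN ((n:ℤ)+1) (by omega) (by omega) (by push_cast at h0 ⊢; linear_combination h0)
        | (i+1) =>
          rcases Nat.lt_or_ge i n with hi | hi
          · obtain ⟨k, rfl⟩ : ∃ k, n = i + k + 1 := ⟨n - i - 1, by omega⟩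
            show _ = Gg b f s (i+k+1) (i+1) - Gg b f s (i+k+1) i
            refine wz_mid b f s i k ?_ ?_ ?_ ?_
            · exact rf_shift_ne s (i+k+2) hfacN (i+1) (i+k+2) (by omega) (by omega)
            · exact rf_shift_ne s (i+k+2) hfacN i (i+k+2) (by omega) (by omega)
            · intro h0
              exact hfacN ((k:ℤ)+1) (by push_cast; omega) (by push_cast; omega)
                (by push_cast at h0 ⊢; linear_combination h0)
            · intro h0
              exact hfacN (-((i:ℤ)+1)) (by push_cast; omega) (by push_cast; omega)
                (by push_cast at h0 ⊢; linear_combination h0)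
          · have hieq : i = n := by omega
            subst hieq
            show _ = Gg b f s i (i+1) - Gg b f s i i
            refine wz_top b f s i ?_ ?_
            · exact rf_shift_ne s (i+1) hfacN i (i+1) (by omega) (by omega)
            · intro h0
              exact hfacN (-((i:ℤ)+1)) (by push_cast; omega) (by push_cast; omega)
                (by push_cast at h0 ⊢; linear_combination h0)
      linear_combination key2
    have hsum : ∑ j ∈ Finset.range (n+1+1), T b f s (n+1) j
        = ∑ j ∈ Finset.range (n+2), ((s+b+f+(n:ℕ)) * T b f s n j + (H (j+1) - H j)) :=
      Finset.sum_congr rfl tele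
    rw [hsum, Finset.sum_add_distrib, ← Finset.mul_sum, Finset.sum_range_sub H,
      Finset.sum_range_succ, ih s hs', T_top, add_zero]
    have hHtop : H (n+2) = 0 := Gg_top b f s n
    have hH0 : H 0 = 0 := rfl
    rw [hHtop, hH0, rf_succ]
    push_cast
    ring

theorem stmt_14 (n : ℕ) (b c f : ℂ)
    (h : ∀ m : ℤ, -(n : ℤ) ≤ m → m ≤ (n : ℤ) → c - b - f ≠ m) :
    risingFactorial c n =
      ∑ j ∈ Finset.range (n + 1),
        (-1) ^ j * (n.choose j : ℂ) * risingFactorial b j * risingFactorial f j *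
          risingFactorial (c - b) (n - j) * risingFactorial (c - f) (n - j) *
            (c - b - f + n - 2 * j) / risingFactorial (c - b - f - j) (n + 1) := by
  calc risingFactorial c n = risingFactorial (c-b-f+b+f) n := by congr 1; ring
    _ = ∑ j ∈ Finset.range (n+1), T b f (c-b-f) n j := (key b f n (c-b-f) h).symm
    _ = _ := by
      refine Finset.sum_congr rfl fun j _ => ?_
      simp only [T]
      rw [show c-b-f+f = c-b from by ring, show c-b-f+b = c-f from by ring]
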